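/- Let σ ∈ {1,−1} and let n ≥ 2 be even. Then there is no nonempty open interval I ⊂ (0,∞) on which 2 − σr²(1−cos(2πj/n)) > 0 for all j ∈ {1,…,n−1} and Σ_{j∈{1,…,n−1}, j even} (1−cos(2πj/n))^{−1/2}·(2 − σr²(1−cos(2πj/n)))^{−3/2} = Σ_{j∈{1,…,n−1}, j odd} (1−cos(2πj/n))^{−1/2}·(2 − σr²(1−cos(2πj/n)))^{−3/2} holds identically for all r ∈ I. Consequently, if masses alternate between the values m (even-indexed bodies) and M (odd-indexed bodies) and the quantities b_i(r) = Σ_{j=1}^{n−1} m_{j+i}(1−cos(2πj/n))^{−1/2}(2−σr²(1−cos(2πj/n)))^{−3/2} satisfy b_1(r) = b_2(r) for all r in such an interval, then M = m. -/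

import Mathlib

/-!
Write `u = σ r²` and `c_j = 1 - cos (2πj/n) ∈ [0, 2]`. The even-minus-odd sum
`F(u) = ∑ ±c_j^(-1/2) (2 - u c_j)^(-3/2)` is real-analytic on `u < 1`, so if it vanishes for `r`
in an open interval, it vanishes near `σ r₀²` and hence on all of `(-∞, 1)`. For `n = 2k` the
single term `j = k` has `c_k = 2` and blows up as `u → 1⁻`, while every other term stays bounded:
a contradiction. For alternating masses `b₁ - b₂ = (M - m) F`, which forces `M = m`.
-/

open Real Finset Filter Topology
open scoped ContDiff

noncomputable def chordWeight (n : ℕ) (j : ℤ) : ℝ := 1 - Real.cos (2 * π * j / n)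

noncomputable def balanceTerm (c u : ℝ) : ℝ := c ^ (-(1 : ℝ) / 2) * (2 - u * c) ^ (-(3 : ℝ) / 2)

noncomputable def signedBalanceSum {ι : Type*} (s : Finset ι) (a c : ι → ℝ) (u : ℝ) : ℝ :=
  ∑ j ∈ s, a j * balanceTerm (c j) u

lemma analyticAt_balanceTerm {c u : ℝ} (h : 0 < 2 - u * c) :
    AnalyticAt ℝ (balanceTerm c) u := by
  have hpow : AnalyticAt ℝ (fun x : ℝ => x ^ (-(3 : ℝ) / 2)) (2 - u * c) :=
    (Real.contDiffAt_rpow_const_of_ne (n := ω) h.ne').analyticAt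
  exact analyticAt_const.mul (hpow.fun_comp (f := fun v => 2 - v * c) (by fun_prop))

lemma tendsto_balanceTerm_two : Tendsto (balanceTerm 2) (𝓝[<] 1) atTop := by
  have hbase : Tendsto (fun u : ℝ => 2 - u * 2) (𝓝[<] 1) (𝓝[>] 0) := by
    refine tendsto_nhdsWithin_iff.2 ⟨?_, ?_⟩
    · have : Tendsto (fun u : ℝ => 2 - u * 2) (𝓝 1) (𝓝 (2 - 1 * 2)) :=
        (continuous_const.sub (continuous_id.mul continuous_const)).tendsto 1
      simpa using this.mono_left nhdsWithin_le_nhds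
    · filter_upwards [self_mem_nhdsWithin] with u (hu : u < 1)
      show (0 : ℝ) < 2 - u * 2
      linarith
  exact ((tendsto_rpow_neg_nhdsGT_zero (by norm_num)).comp hbase).const_mul_atTop
    (Real.rpow_pos_of_pos two_pos _)

lemma two_sub_mul_pos {u c : ℝ} (hu : u < 1) (hc : c ∈ Set.Icc 0 2) : 0 < 2 - u * c := by
  obtain ⟨hc0, hc2⟩ := hc
  rcases le_or_gt u 0 with hu0 | hu0
  · nlinarith
  · nlinarith [mul_le_mul_of_nonneg_left hc2 hu0.le]

section SignedBalanceSum

variable {ι : Type*} {s : Finset ι} {a c : ι → ℝ}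

lemma signedBalanceSum_eqOn_zero (hc : ∀ j ∈ s, c j ∈ Set.Icc 0 2) {u₀ : ℝ} (hu₀ : u₀ < 1)
    (h : signedBalanceSum s a c =ᶠ[𝓝 u₀] 0) :
    Set.EqOn (signedBalanceSum s a c) 0 (Set.Iio 1) := by
  have hanalytic : AnalyticOnNhd ℝ (signedBalanceSum s a c) (Set.Iio 1) := fun u hu =>
    Finset.analyticAt_fun_sum _ fun j hj =>
      analyticAt_const.mul (analyticAt_balanceTerm (two_sub_mul_pos hu (hc j hj)))
  exact hanalytic.eqOn_zero_of_preconnected_of_eventuallyEq_zero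
    (convex_Iio 1).isPreconnected hu₀ h

lemma not_eventually_signedBalanceSum_eq_zero [DecidableEq ι] {k : ι} (hk : k ∈ s)
    (hak : a k ≠ 0) (hck : c k = 2) (hc : ∀ j ∈ s, j ≠ k → c j < 2) :
    ¬ ∀ᶠ u in 𝓝[<] 1, signedBalanceSum s a c u = 0 := by
  intro h
  set rest : ℝ → ℝ := fun u => ∑ j ∈ s.erase k, a j * balanceTerm (c j) u
  have hrest : Tendsto rest (𝓝[<] 1) (𝓝 (rest 1)) := by
    refine (AnalyticAt.continuousAt (𝕜 := ℝ) ?_).tendsto.mono_left nhdsWithin_le_nhds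
    refine Finset.analyticAt_fun_sum _ fun j hj => analyticAt_const.mul ?_
    have := hc j (mem_of_mem_erase hj) (ne_of_mem_erase hj)
    exact analyticAt_balanceTerm (by linarith)
  have hsolve : ∀ᶠ u in 𝓝[<] 1, -rest u / a k = balanceTerm 2 u := by
    filter_upwards [h] with u hu
    rw [signedBalanceSum, ← add_sum_erase s _ hk, hck] at hu
    field_simp
    linarith
  exact not_tendsto_atTop_of_tendsto_nhds
    ((hrest.neg.div_const (a k)).congr' hsolve) tendsto_balanceTerm_two

end SignedBalanceSum

lemma chordWeight_mem_Icc (n : ℕ) (j : ℤ) : chordWeight n j ∈ Set.Icc 0 2 := by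
  unfold chordWeight
  constructor <;> linarith [Real.cos_le_one (2 * π * j / n), Real.neg_one_le_cos (2 * π * j / n)]

lemma chordWeight_half {k : ℕ} (hk : k ≠ 0) : chordWeight (k + k) k = 2 := by
  have : 2 * π * (k : ℤ) / ((k + k : ℕ) : ℝ) = π := by
    push_cast
    field_simp
    ring
  rw [chordWeight, this, Real.cos_pi]
  norm_num

lemma chordWeight_lt_two {n : ℕ} {j : ℤ} (hj : j ∈ Icc (1 : ℤ) (n - 1)) (hjn : 2 * j ≠ n) :
    chordWeight n j < 2 := by
  rw [mem_Icc] at hj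
  refine lt_of_le_of_ne (chordWeight_mem_Icc n j).2 fun h => hjn ?_
  obtain ⟨m, hm⟩ := Real.cos_eq_neg_one_iff.1 (by rw [chordWeight] at h; linarith)
  have hn : (0 : ℝ) < n := by exact_mod_cast (by omega : 0 < n)
  have hreal : (n : ℝ) * (1 + 2 * m) = 2 * j := by
    field_simp at hm
    nlinarith [Real.pi_pos]
  have hint : (n : ℤ) * (1 + 2 * m) = 2 * j := by exact_mod_cast hreal
  have hm0 : m = 0 := by
    rcases lt_trichotomy m 0 with hm | hm | hm <;> [nlinarith; exact hm; nlinarith]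
  rw [hm0] at hint
  omega

lemma eventually_exists_mul_sq_eq {σ r₀ : ℝ} (hσ : σ ≠ 0) (hr₀ : 0 < r₀) {I : Set ℝ}
    (hI : I ∈ 𝓝 r₀) : ∀ᶠ u in 𝓝 (σ * r₀ ^ 2), ∃ r ∈ I, σ * r ^ 2 = u := by
  have hquot : Tendsto (fun u => u / σ) (𝓝 (σ * r₀ ^ 2)) (𝓝 (r₀ ^ 2)) :=
    (continuous_id.div_const σ).tendsto' _ _ (by simp [hσ])
  have hsqrt : Tendsto (fun u => Real.sqrt (u / σ)) (𝓝 (σ * r₀ ^ 2)) (𝓝 r₀) := by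
    simpa [Real.sqrt_sq hr₀.le] using hquot.sqrt
  filter_upwards [hsqrt hI, hquot.eventually (lt_mem_nhds (by positivity))] with u hu hpos
  refine ⟨_, hu, ?_⟩
  rw [Real.sq_sqrt hpos.le]
  field_simp

lemma sum_filter_even_sub_sum_filter_odd (s : Finset ℤ) (g : ℤ → ℝ) :
    ∑ j ∈ s with Even j, g j - ∑ j ∈ s with Odd j, g j =
      ∑ j ∈ s, (if Even j then 1 else -1) * g j := by
  simp only [ite_mul, one_mul, neg_one_mul, sum_ite, sum_neg_distrib, ← Int.not_even_iff_odd]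
  ring

lemma sum_shift_one_sub_sum_shift_two_of_alternating {mm MM : ℝ} {masses : ℤ → ℝ}
    (hEv : ∀ j : ℤ, Even j → masses j = mm) (hOd : ∀ j : ℤ, Odd j → masses j = MM)
    (s : Finset ℤ) (g : ℤ → ℝ) :
    ∑ j ∈ s, masses (j + 1) * g j - ∑ j ∈ s, masses (j + 2) * g j =
      (MM - mm) * (∑ j ∈ s with Even j, g j - ∑ j ∈ s with Odd j, g j) := by
  have hdiff (j : ℤ) : masses (j + 1) - masses (j + 2) = (MM - mm) * if Even j then 1 else -1 := by
    rcases Int.even_or_odd j with hj | hj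
    · rw [hOd _ hj.add_one, hEv _ (hj.add even_two), if_pos hj]; ring
    · rw [hEv _ hj.add_one, hOd _ (hj.add_even even_two), if_neg (Int.not_even_iff_odd.2 hj)]; ring
  rw [sum_filter_even_sub_sum_filter_odd, mul_sum, ← sum_sub_distrib]
  refine sum_congr rfl fun j _ => ?_
  rw [← sub_mul, hdiff, mul_assoc]

theorem not_exists_even_odd_balance_identity {σ : ℝ} (hσ : σ ≠ 0) {n : ℕ} (hn : 2 ≤ n)
    (hne : Even n) :
    ¬ ∃ I : Set ℝ, IsOpen I ∧ I.Nonempty ∧ I ⊆ Set.Ioi 0 ∧ ∀ r ∈ I,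
      (∀ j ∈ Icc (1 : ℤ) (n - 1), 0 < 2 - σ * r ^ 2 * chordWeight n j) ∧
      ∑ j ∈ Icc (1 : ℤ) (n - 1) with Even j, balanceTerm (chordWeight n j) (σ * r ^ 2) =
        ∑ j ∈ Icc (1 : ℤ) (n - 1) with Odd j, balanceTerm (chordWeight n j) (σ * r ^ 2) := by
  rintro ⟨I, hIo, ⟨r₀, hr₀⟩, hIpos, hI⟩
  obtain ⟨k, rfl⟩ := hne
  have hk0 : k ≠ 0 := by omega
  have hk : (k : ℤ) ∈ Icc (1 : ℤ) (↑(k + k) - 1) := by rw [mem_Icc]; omega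
  have hu₀ : σ * r₀ ^ 2 < 1 := by
    have := (hI r₀ hr₀).1 k hk
    rw [chordWeight_half hk0] at this
    linarith
  have hzero : signedBalanceSum (Icc (1 : ℤ) (↑(k + k) - 1)) (fun j => if Even j then 1 else -1)
      (chordWeight (k + k)) =ᶠ[𝓝 (σ * r₀ ^ 2)] 0 := by
    filter_upwards [eventually_exists_mul_sq_eq hσ (hIpos hr₀) (hIo.mem_nhds hr₀)]
    rintro _ ⟨r, hr, rfl⟩
    rw [Pi.zero_apply, signedBalanceSum, ← sum_filter_even_sub_sum_filter_odd, sub_eq_zero]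
    exact (hI r hr).2
  refine not_eventually_signedBalanceSum_eq_zero (a := fun j => if Even j then 1 else -1) hk
    (by split_ifs <;> norm_num)
    (chordWeight_half hk0) (fun j hj hjk => chordWeight_lt_two hj (by push_cast; omega)) ?_
  exact eventually_nhdsWithin_of_forall
    (signedBalanceSum_eqOn_zero (fun j _ => chordWeight_mem_Icc _ j) hu₀ hzero)

theorem polygonal_even_odd_sums_not_identically_equal_and_alternating_masses_equal
    (σ : ℝ) (hσ : σ = 1 ∨ σ = -1) (n : ℕ) (hn : 2 ≤ n) (hne : Even n) :
    (¬ ∃ I : Set ℝ, IsOpen I ∧ I.Nonempty ∧ I ⊆ Set.Ioi 0 ∧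
      ∀ r ∈ I,
        (∀ j ∈ Finset.Icc (1 : ℤ) (n - 1),
          0 < 2 - σ * r ^ 2 * (1 - Real.cos (2 * π * j / n))) ∧
        ∑ j ∈ (Finset.Icc (1 : ℤ) (n - 1)).filter (fun j => Even j),
            (1 - Real.cos (2 * π * j / n)) ^ (-(1 : ℝ) / 2) *
              (2 - σ * r ^ 2 * (1 - Real.cos (2 * π * j / n))) ^ (-(3 : ℝ) / 2)
          = ∑ j ∈ (Finset.Icc (1 : ℤ) (n - 1)).filter (fun j => Odd j),
            (1 - Real.cos (2 * π * j / n)) ^ (-(1 : ℝ) / 2) *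
              (2 - σ * r ^ 2 * (1 - Real.cos (2 * π * j / n))) ^ (-(3 : ℝ) / 2)) ∧
    (∀ (mm MM : ℝ) (masses : ℤ → ℝ), 0 < mm → 0 < MM →
      (∀ j : ℤ, Even j → masses j = mm) →
      (∀ j : ℤ, Odd j → masses j = MM) →
      ∀ I : Set ℝ, IsOpen I → I.Nonempty → I ⊆ Set.Ioi 0 →
        (∀ r ∈ I,
          (∀ j ∈ Finset.Icc (1 : ℤ) (n - 1),
            0 < 2 - σ * r ^ 2 * (1 - Real.cos (2 * π * j / n))) ∧
          ∑ j ∈ Finset.Icc (1 : ℤ) (n - 1),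
              masses (j + 1) * (1 - Real.cos (2 * π * j / n)) ^ (-(1 : ℝ) / 2) *
                (2 - σ * r ^ 2 * (1 - Real.cos (2 * π * j / n))) ^ (-(3 : ℝ) / 2)
            = ∑ j ∈ Finset.Icc (1 : ℤ) (n - 1),
              masses (j + 2) * (1 - Real.cos (2 * π * j / n)) ^ (-(1 : ℝ) / 2) *
                (2 - σ * r ^ 2 * (1 - Real.cos (2 * π * j / n))) ^ (-(3 : ℝ) / 2)) →
        MM = mm) := by
  have hσ0 : σ ≠ 0 := by rcases hσ with rfl | rfl <;> norm_num
  have hsums := not_exists_even_odd_balance_identity hσ0 hn hne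
  refine ⟨hsums, fun mm MM masses _ _ hEv hOd I hIo hIne hIpos hb => ?_⟩
  by_contra hMm
  refine hsums ⟨I, hIo, hIne, hIpos, fun r hr => ⟨(hb r hr).1, ?_⟩⟩
  have hb₁₂ := sub_eq_zero.2 (hb r hr).2
  simp only [mul_assoc (masses _)] at hb₁₂
  rw [sum_shift_one_sub_sum_shift_two_of_alternating hEv hOd] at hb₁₂
  exact sub_eq_zero.1 ((mul_eq_zero.1 hb₁₂).resolve_left (sub_ne_zero.2 hMm))
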